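/- The function U(z,t) = (t² + (1+|z|²)²)^{−1/2} satisfies ∫_{ℂ×ℝ} |z|² U(z,t)⁴ dz dt = π²/4 (equivalently, writing z = x+iy, ∫ (x²+y²) U⁴ = π²/4), where the integral is with respect to Lebesgue measure on ℂ×ℝ ≅ ℝ³. -/

import Mathlib

/-! With `a = 1 + |z|²` one has `U⁴ = (t² + a²)⁻²`. Scaling `t = a s` and the antiderivative
`(s / (1 + s²) + arctan s) / 2` of `(1 + s²)⁻²` give `∫ (t² + a²)⁻² dt = π / (2 a³)`. Fubini then
leaves `π/2 ∫_ℂ |z|² (1 + |z|²)⁻³ dz`, which in polar coordinates is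
`π/2 · 2π ∫₀^∞ r³ (1 + r²)⁻³ dr = π/2 · 2π · 1/4`. -/

open MeasureTheory Real

/-- The Jerison–Lee bubble `U(z,t) = (t² + (1+|z|²)²)^{-1/2}` on `H¹ = ℂ × ℝ`. -/
noncomputable def jerisonLeeBubble (p : ℂ × ℝ) : ℝ :=
  (p.2 ^ 2 + (1 + ‖p.1‖ ^ 2) ^ 2) ^ (-(1 / 2 : ℝ))

open Set Filter Topology

theorem tendsto_div_one_add_sq_atTop : Tendsto (fun x : ℝ => x / (1 + x ^ 2)) atTop (𝓝 0) := by
  refine squeeze_zero' ?_ ?_ tendsto_inv_atTop_zero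
  · filter_upwards [eventually_ge_atTop 0] with x hx
    positivity
  · filter_upwards [eventually_gt_atTop 0] with x hx
    rw [div_le_iff₀ (by positivity), mul_add, mul_one, sq, ← mul_assoc, inv_mul_cancel₀ hx.ne',
      one_mul]
    linarith [inv_pos.2 hx]

theorem integral_Ioi_inv_one_add_sq_sq : ∫ x in Ioi (0 : ℝ), ((1 + x ^ 2) ^ 2)⁻¹ = π / 4 := by
  have hderiv (x : ℝ) :
      HasDerivAt (fun x : ℝ => (x / (1 + x ^ 2) + arctan x) / 2) ((1 + x ^ 2) ^ 2)⁻¹ x := by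
    have hq : HasDerivAt (fun x : ℝ => 1 + x ^ 2) (2 * x) x := by
      simpa using (hasDerivAt_pow 2 x).const_add 1
    refine ((((hasDerivAt_id' x).div hq (by positivity)).add (hasDerivAt_arctan x)).div_const
      2).congr_deriv ?_
    have : (1 : ℝ) + x ^ 2 ≠ 0 := by positivity
    field_simp
    ring
  have hlim :
      Tendsto (fun x : ℝ => (x / (1 + x ^ 2) + arctan x) / 2) atTop (𝓝 ((0 + π / 2) / 2)) :=
    (tendsto_div_one_add_sq_atTop.add
      (tendsto_nhds_of_tendsto_nhdsWithin tendsto_arctan_atTop)).div_const 2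
  rw [integral_Ioi_of_hasDerivAt_of_nonneg' (fun x _ => hderiv x)
    (fun x _ => by positivity) hlim]
  simp only [arctan_zero]
  ring

theorem integral_inv_one_add_sq_sq : ∫ x : ℝ, ((1 + x ^ 2) ^ 2)⁻¹ = π / 2 := by
  have h := integral_comp_abs (f := fun x : ℝ => ((1 + x ^ 2) ^ 2)⁻¹)
  simp only [sq_abs] at h
  rw [h, integral_Ioi_inv_one_add_sq_sq]
  ring

theorem integrable_inv_one_add_sq_sq : Integrable fun x : ℝ => ((1 + x ^ 2) ^ 2)⁻¹ := by
  have := integrable_rpow_neg_one_add_norm_sq (E := ℝ) (μ := volume) (r := 4) (by norm_num)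
  refine this.congr (ae_of_all _ fun x => ?_)
  simp only [norm_eq_abs, sq_abs]
  rw [show (-4 / 2 : ℝ) = -(2 : ℕ) by norm_num, rpow_neg (by positivity), rpow_natCast]

theorem inv_sq_add_sq_sq_eq {a : ℝ} (ha : a ≠ 0) (t : ℝ) :
    ((t ^ 2 + a ^ 2) ^ 2)⁻¹ = (a ^ 4)⁻¹ * ((1 + (t / a) ^ 2) ^ 2)⁻¹ := by
  field_simp
  ring

theorem integrable_inv_sq_add_sq_sq {a : ℝ} (ha : a ≠ 0) :
    Integrable fun t : ℝ => ((t ^ 2 + a ^ 2) ^ 2)⁻¹ := by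
  simp_rw [inv_sq_add_sq_sq_eq ha]
  exact (integrable_inv_one_add_sq_sq.comp_div ha).const_mul _

theorem integral_inv_sq_add_sq_sq {a : ℝ} (ha : 0 < a) :
    ∫ t : ℝ, ((t ^ 2 + a ^ 2) ^ 2)⁻¹ = π / (2 * a ^ 3) := by
  simp_rw [inv_sq_add_sq_sq_eq ha.ne']
  rw [integral_const_mul, Measure.integral_comp_div (fun x => ((1 + x ^ 2) ^ 2)⁻¹),
    integral_inv_one_add_sq_sq, abs_of_pos ha, smul_eq_mul]
  field_simp

theorem integral_Ioi_pow_three_mul_inv_one_add_sq_pow_three :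
    ∫ y in Ioi (0 : ℝ), y ^ 3 * ((1 + y ^ 2) ^ 3)⁻¹ = 1 / 4 := by
  have hderiv (y : ℝ) : HasDerivAt (fun y : ℝ => (4 * (1 + y ^ 2) ^ 2)⁻¹ - (2 * (1 + y ^ 2))⁻¹)
      (y ^ 3 * ((1 + y ^ 2) ^ 3)⁻¹) y := by
    have hq : HasDerivAt (fun y : ℝ => 1 + y ^ 2) (2 * y) y := by
      simpa using (hasDerivAt_pow 2 y).const_add 1
    refine ((((hq.fun_pow 2).const_mul 4).inv (by positivity)).sub
      ((hq.const_mul 2).inv (by positivity))).congr_deriv ?_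
    have : (1 : ℝ) + y ^ 2 ≠ 0 := by positivity
    field_simp
    ring
  have htop : Tendsto (fun y : ℝ => 1 + y ^ 2) atTop atTop :=
    tendsto_atTop_add_const_left _ 1 (tendsto_pow_atTop two_ne_zero)
  have hlim : Tendsto (fun y : ℝ => (4 * (1 + y ^ 2) ^ 2)⁻¹ - (2 * (1 + y ^ 2))⁻¹) atTop
      (𝓝 (0 - 0)) :=
    (tendsto_inv_atTop_zero.comp (((tendsto_pow_atTop two_ne_zero).comp htop).const_mul_atTop
      (by norm_num))).sub (tendsto_inv_atTop_zero.comp (htop.const_mul_atTop (by norm_num)))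
  rw [integral_Ioi_of_hasDerivAt_of_nonneg' (fun y _ => hderiv y)
    (fun y (hy : 0 < y) => by positivity) hlim]
  norm_num

theorem integrable_norm_sq_mul_inv_one_add_norm_sq_pow_three :
    Integrable fun z : ℂ => ‖z‖ ^ 2 * ((1 + ‖z‖ ^ 2) ^ 3)⁻¹ := by
  refine (integrable_rpow_neg_one_add_norm_sq (E := ℂ) (μ := volume) (r := 4)
    (by norm_num [Complex.finrank_real_complex])).mono' (by fun_prop)
    (ae_of_all _ fun z => ?_)
  have hs : (0 : ℝ) < 1 + ‖z‖ ^ 2 := by positivity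
  rw [norm_of_nonneg (by positivity), show (-4 / 2 : ℝ) = -(2 : ℕ) by norm_num,
    rpow_neg hs.le, rpow_natCast, pow_succ (1 + ‖z‖ ^ 2) 2, mul_inv, mul_left_comm]
  exact mul_le_of_le_one_right (by positivity)
    (mul_inv_le_one_of_le₀ (le_add_of_nonneg_left zero_le_one) hs.le)

theorem integral_norm_sq_mul_inv_one_add_norm_sq_pow_three :
    ∫ z : ℂ, ‖z‖ ^ 2 * ((1 + ‖z‖ ^ 2) ^ 3)⁻¹ = π / 2 := by
  have hball : volume.real (Metric.ball (0 : ℂ) 1) = π := by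
    simp [measureReal_def, Complex.volume_ball]
  have hradial (y : ℝ) :
      y ^ (2 - 1) • (y ^ 2 * ((1 + y ^ 2) ^ 3)⁻¹) = y ^ 3 * ((1 + y ^ 2) ^ 3)⁻¹ := by
    rw [smul_eq_mul]
    ring
  rw [integral_fun_norm_addHaar volume fun y => y ^ 2 * ((1 + y ^ 2) ^ 3)⁻¹,
    Complex.finrank_real_complex, hball]
  simp_rw [hradial]
  rw [integral_Ioi_pow_three_mul_inv_one_add_sq_pow_three, nsmul_eq_mul, smul_eq_mul]
  ring

theorem jerisonLeeBubble_pow_four (p : ℂ × ℝ) :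
    jerisonLeeBubble p ^ 4 = ((p.2 ^ 2 + (1 + ‖p.1‖ ^ 2) ^ 2) ^ 2)⁻¹ := by
  have hpos : 0 < p.2 ^ 2 + (1 + ‖p.1‖ ^ 2) ^ 2 := by positivity
  rw [jerisonLeeBubble, ← rpow_natCast _ 4, ← rpow_mul hpos.le,
    show -(1 / 2 : ℝ) * (4 : ℕ) = -(2 : ℕ) by norm_num, rpow_neg hpos.le, rpow_natCast]

theorem integrable_jerisonLeeBubble_pow_four_slice (z : ℂ) :
    Integrable fun t : ℝ => jerisonLeeBubble (z, t) ^ 4 := by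
  simp_rw [jerisonLeeBubble_pow_four]
  exact integrable_inv_sq_add_sq_sq (by positivity)

theorem integral_jerisonLeeBubble_pow_four_slice (z : ℂ) :
    ∫ t : ℝ, jerisonLeeBubble (z, t) ^ 4 = π / 2 * ((1 + ‖z‖ ^ 2) ^ 3)⁻¹ := by
  simp_rw [jerisonLeeBubble_pow_four]
  rw [integral_inv_sq_add_sq_sq (by positivity)]
  field_simp

theorem integrable_norm_sq_mul_jerisonLeeBubble_pow_four :
    Integrable fun p : ℂ × ℝ => ‖p.1‖ ^ 2 * jerisonLeeBubble p ^ 4 := by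
  rw [Measure.volume_eq_prod, integrable_prod_iff (by unfold jerisonLeeBubble; fun_prop)]
  refine ⟨ae_of_all _ fun z =>
    (integrable_jerisonLeeBubble_pow_four_slice z).const_mul (‖z‖ ^ 2), ?_⟩
  refine (integrable_norm_sq_mul_inv_one_add_norm_sq_pow_three.const_mul (π / 2)).congr
    (ae_of_all _ fun z => ?_)
  have hnonneg (t : ℝ) : 0 ≤ ‖z‖ ^ 2 * jerisonLeeBubble (z, t) ^ 4 := by positivity
  simp only [norm_of_nonneg (hnonneg _)]
  rw [integral_const_mul, integral_jerisonLeeBubble_pow_four_slice]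
  ring

/-- `∫_{ℂ×ℝ} |z|² U(z,t)⁴ dz dt = π²/4`, with respect to Lebesgue
measure on `ℂ × ℝ` (here `|z|² = x² + y²` for `z = x + iy`). -/
theorem integral_normSq_mul_jerisonLeeBubble_fourth :
    ∫ p : ℂ × ℝ, ‖p.1‖ ^ 2 * (jerisonLeeBubble p) ^ 4 = π ^ 2 / 4 := by
  rw [Measure.volume_eq_prod, integral_prod _ integrable_norm_sq_mul_jerisonLeeBubble_pow_four]
  simp_rw [integral_const_mul, integral_jerisonLeeBubble_pow_four_slice, mul_left_comm _ (π / 2)]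
  rw [integral_const_mul, integral_norm_sq_mul_inv_one_add_norm_sq_pow_three]
  ring
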